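/- arXiv:1903.05135 — 3 statements merged into one kernel-verified Lean document; each statement's English description precedes it below -/
import Mathlib

section
/- Two irrational numbers x and y are in the same orbit of the action of PGL_2(Z) on the irrationals by fractional linear transformations if and only if their continued fraction expansions are tail equivalent. -/
/-- The continued fraction digits of a real number: `cfDigit 0 x = ⌊x⌋` and
`cfDigit (n+1) x = cfDigit n (1 / fract x)`. For irrational `x` these are the
partial quotients of the unique continued fraction expansion of `x`. -/
noncomputable def cfDigit : ℕ → ℝ → ℤ
  | 0, x => ⌊x⌋
  | n + 1, x => cfDigit n (Int.fract x)⁻¹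

/-- Two reals have tail-equivalent continued fraction expansions. -/
def CFTailEquiv (x y : ℝ) : Prop :=
  ∃ n m : ℕ, 0 < n ∧ 0 < m ∧ ∀ i : ℕ, cfDigit (n + i) x = cfDigit (m + i) y

/-- `x` and `y` are in the same orbit of the action of `PGL₂(ℤ)` by fractional
linear transformations: some integer matrix of determinant `±1` carries `x`
to `y`. -/
def SamePGL2ZOrbit (x y : ℝ) : Prop :=
  ∃ M : Matrix (Fin 2) (Fin 2) ℤ, (M.det = 1 ∨ M.det = -1) ∧
    y = ((M 0 0 : ℝ) * x + (M 0 1 : ℝ)) / ((M 1 0 : ℝ) * x + (M 1 1 : ℝ))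

/-! Tail equivalence of irrationals is the grand-orbit relation of the shift
`x ↦ (fract x)⁻¹`, because the digits of an irrational determine it (its continued fraction
converges to it). The shift is the Möbius map of `!![0, 1; 1, -⌊x⌋]`, so grand orbits lie inside
`PGL₂(ℤ)`-orbits. Conversely, Euclid's algorithm on the first column factors a matrix `M` with
lower left entry `c ≠ 0` as `!![q, 1; 1, 0] * N` with `|N 1 0| < |c|`, so that
`mobius M x = (mobius N x)⁻¹ + q`; by induction on `|c|` it then suffices that `x ↦ x + k`,
`x ↦ -x` and `x ↦ x⁻¹` preserve grand orbits. For `x ↦ -x` this is the identity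
`(fract f⁻¹)⁻¹ + 1 = (1 - f)⁻¹` for `f = fract x > 1/2`. -/

def SameGrandOrbit {α : Type*} (f : α → α) (x y : α) : Prop :=
  ∃ n m : ℕ, f^[n] x = f^[m] y

namespace SameGrandOrbit

variable {α : Type*} {f : α → α} {x y z : α}

theorem symm : SameGrandOrbit f x y → SameGrandOrbit f y x
  | ⟨n, m, h⟩ => ⟨m, n, h.symm⟩

theorem trans : SameGrandOrbit f x y → SameGrandOrbit f y z → SameGrandOrbit f x z
  | ⟨n, m, h⟩, ⟨n', m', h'⟩ => ⟨n' + n, m' + m, by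
      rw [Function.iterate_add_apply, h, ← Function.iterate_add_apply, add_comm n' m,
        Function.iterate_add_apply, h', ← Function.iterate_add_apply, add_comm]⟩

instance : @Trans α α α (SameGrandOrbit f) (SameGrandOrbit f) (SameGrandOrbit f) := ⟨trans⟩

theorem of_apply_eq (h : f x = f y) : SameGrandOrbit f x y := ⟨1, 1, h⟩

end SameGrandOrbit

noncomputable def cfShift (x : ℝ) : ℝ := (Int.fract x)⁻¹

theorem cfDigit_add (n i : ℕ) (x : ℝ) : cfDigit (n + i) x = cfDigit i (cfShift^[n] x) := by
  induction n generalizing x with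
  | zero => simp
  | succ n ih => rw [Nat.add_right_comm, cfDigit, ih, Function.iterate_succ_apply]; rfl

theorem Irrational.fract {x : ℝ} (hx : Irrational x) : Irrational (Int.fract x) :=
  hx.sub_intCast ⌊x⌋

theorem Irrational.cfShift {x : ℝ} (hx : Irrational x) : Irrational (cfShift x) :=
  hx.fract.inv

theorem Irrational.iterate_cfShift {x : ℝ} (hx : Irrational x) (n : ℕ) :
    Irrational (_root_.cfShift^[n] x) := by
  induction n with
  | zero => exact hx
  | succ n ih => rw [Function.iterate_succ_apply']; exact ih.cfShift

theorem cfShift_add_intCast (x : ℝ) (k : ℤ) : cfShift (x + k) = cfShift x := by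
  rw [cfShift, cfShift, Int.fract_add_intCast]

theorem cfShift_of_pos_of_lt_one {x : ℝ} (h0 : 0 < x) (h1 : x < 1) : cfShift x = x⁻¹ := by
  rw [cfShift, Int.fract_eq_self.mpr ⟨h0.le, h1⟩]

theorem cfShift_cfShift_add_one {x : ℝ} (h : 1 / 2 < Int.fract x) :
    cfShift (cfShift x) + 1 = cfShift (-x) := by
  rw [cfShift, cfShift, cfShift, Int.fract_neg (by positivity)]
  set f := Int.fract x
  have hf1 : f < 1 := Int.fract_lt_one x
  have hf0 : 0 < f := by linarith
  have hfract : Int.fract f⁻¹ = f⁻¹ - 1 := by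
    rw [Int.fract_eq_iff]
    refine ⟨?_, ?_, 1, by push_cast; ring⟩
    · linarith [(one_le_inv₀ hf0).mpr hf1.le]
    · linarith [(inv_lt_comm₀ hf0 two_pos).mpr (by linarith)]
  have : 1 - f ≠ 0 := by linarith
  rw [hfract]
  field_simp
  ring

namespace SameGrandOrbit

theorem add_intCast (x : ℝ) (k : ℤ) : SameGrandOrbit cfShift x (x + k) :=
  of_apply_eq (cfShift_add_intCast x k).symm

theorem neg {x : ℝ} (hx : Irrational x) : SameGrandOrbit cfShift x (-x) := by
  wlog h : 1 / 2 < Int.fract x generalizing x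
  · have hhalf : Int.fract x ≠ 1 / 2 := by simpa using hx.fract.ne_rat (1 / 2)
    have h' : 1 / 2 < Int.fract (-x) := by
      rw [Int.fract_neg hx.fract.ne_zero]
      have := lt_of_le_of_ne (not_lt.mp h) hhalf
      linarith
    simpa using (this hx.neg h').symm
  refine ⟨3, 2, ?_⟩
  simp only [Function.iterate_succ_apply', Function.iterate_zero_apply]
  rw [← cfShift_cfShift_add_one h, ← Int.cast_one, cfShift_add_intCast]

theorem inv {x : ℝ} (hx : Irrational x) : SameGrandOrbit cfShift x x⁻¹ := by
  wlog hpos : 0 < x generalizing x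
  · have hneg : 0 < -x := neg_pos.mpr ((not_lt.mp hpos).lt_of_ne hx.ne_zero)
    calc SameGrandOrbit cfShift x (-x) := neg hx
      SameGrandOrbit cfShift _ (-x)⁻¹ := this hx.neg hneg
      SameGrandOrbit cfShift _ x⁻¹ := by rw [inv_neg]; exact (neg hx.inv).symm
  rcases lt_or_gt_of_ne hx.ne_one with h1 | h1
  · exact ⟨1, 0, cfShift_of_pos_of_lt_one hpos h1⟩
  · refine symm ⟨1, 0, ?_⟩
    simpa using cfShift_of_pos_of_lt_one (inv_pos.mpr hpos) (inv_lt_one_of_one_lt₀ h1)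

end SameGrandOrbit

-- Junk value `0` where the denominator vanishes; for `M.det ≠ 0` that needs a rational `x`.
noncomputable def mobius (M : Matrix (Fin 2) (Fin 2) ℤ) (x : ℝ) : ℝ :=
  ((M 0 0 : ℝ) * x + (M 0 1 : ℝ)) / ((M 1 0 : ℝ) * x + (M 1 1 : ℝ))

theorem samePGL2ZOrbit_iff {x y : ℝ} :
    SamePGL2ZOrbit x y ↔ ∃ M : Matrix (Fin 2) (Fin 2) ℤ, IsUnit M.det ∧ y = mobius M x := by
  simp only [SamePGL2ZOrbit, Int.isUnit_iff, mobius]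

theorem mobius_mul (N M : Matrix (Fin 2) (Fin 2) ℤ) {x : ℝ}
    (hden : (M 1 0 : ℝ) * x + M 1 1 ≠ 0) : mobius (N * M) x = mobius N (mobius M x) := by
  simp only [mobius, Matrix.mul_apply, Fin.sum_univ_two, Int.cast_add, Int.cast_mul]
  rw [mul_div_assoc', mul_div_assoc', div_add' _ _ _ hden, div_add' _ _ _ hden,
    div_div_div_cancel_right₀ hden]
  congr 1 <;> ring

theorem mobius_smul_one {d : ℤ} (hd : d ≠ 0) (x : ℝ) : mobius (d • 1) x = x := by
  simp [mobius, hd]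

theorem mobius_denom_ne_zero {M : Matrix (Fin 2) (Fin 2) ℤ} (hM : M.det ≠ 0) {x : ℝ}
    (hx : Irrational x) : (M 1 0 : ℝ) * x + M 1 1 ≠ 0 := by
  intro h
  by_cases hc : M 1 0 = 0
  · simp only [hc, Int.cast_zero, zero_mul, zero_add, Int.cast_eq_zero] at h
    simp [Matrix.det_fin_two, hc, h] at hM
  · refine hx ⟨-(M 1 1 : ℚ) / M 1 0, ?_⟩
    push_cast
    field_simp
    linarith

theorem mobius_adjugate_mobius {M : Matrix (Fin 2) (Fin 2) ℤ} (hM : M.det ≠ 0) {x : ℝ}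
    (hx : Irrational x) : mobius M.adjugate (mobius M x) = x := by
  rw [← mobius_mul _ _ (mobius_denom_ne_zero hM hx), Matrix.adjugate_mul, mobius_smul_one hM]

theorem mobius_ratCast (M : Matrix (Fin 2) (Fin 2) ℤ) (q : ℚ) :
    mobius M q = ((M 0 0 * q + M 0 1) / (M 1 0 * q + M 1 1) : ℚ) := by
  simp [mobius]

theorem Irrational.mobius {M : Matrix (Fin 2) (Fin 2) ℤ} (hM : M.det ≠ 0) {x : ℝ}
    (hx : Irrational x) : Irrational (_root_.mobius M x) := by
  rintro ⟨q, hq⟩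
  refine hx ⟨_, (mobius_ratCast M.adjugate q).symm.trans ?_⟩
  rw [hq, mobius_adjugate_mobius hM hx]

theorem SamePGL2ZOrbit.symm {x y : ℝ} (hx : Irrational x) (h : SamePGL2ZOrbit x y) :
    SamePGL2ZOrbit y x := by
  obtain ⟨M, hM, rfl⟩ := samePGL2ZOrbit_iff.mp h
  refine samePGL2ZOrbit_iff.mpr ⟨M.adjugate, ?_, (mobius_adjugate_mobius hM.ne_zero hx).symm⟩
  simpa [Matrix.det_adjugate] using hM

theorem SamePGL2ZOrbit.trans {x y z : ℝ} (hx : Irrational x) (hxy : SamePGL2ZOrbit x y)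
    (hyz : SamePGL2ZOrbit y z) : SamePGL2ZOrbit x z := by
  obtain ⟨M, hM, rfl⟩ := samePGL2ZOrbit_iff.mp hxy
  obtain ⟨N, hN, rfl⟩ := samePGL2ZOrbit_iff.mp hyz
  refine samePGL2ZOrbit_iff.mpr
    ⟨N * M, ?_, (mobius_mul N M (mobius_denom_ne_zero hM.ne_zero hx)).symm⟩
  rw [Matrix.det_mul]
  exact hN.mul hM

theorem samePGL2ZOrbit_cfShift (x : ℝ) : SamePGL2ZOrbit x (cfShift x) :=
  ⟨!![0, 1; 1, -⌊x⌋], by simp [Matrix.det_fin_two],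
    by simp [cfShift, Int.fract, sub_eq_add_neg]⟩

theorem samePGL2ZOrbit_iterate_cfShift {x : ℝ} (hx : Irrational x) (n : ℕ) :
    SamePGL2ZOrbit x (cfShift^[n] x) := by
  induction n with
  | zero => exact ⟨1, by simp, by simp⟩
  | succ n ih =>
    rw [Function.iterate_succ_apply']
    exact ih.trans hx (samePGL2ZOrbit_cfShift _)

theorem exists_eq_mul_natAbs_lt {M : Matrix (Fin 2) (Fin 2) ℤ} (hc : M 1 0 ≠ 0) :
    ∃ (q : ℤ) (N : Matrix (Fin 2) (Fin 2) ℤ),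
      M = !![q, 1; 1, 0] * N ∧ (N 1 0).natAbs < (M 1 0).natAbs := by
  refine ⟨M 0 0 / M 1 0, !![M 1 0, M 1 1; M 0 0 % M 1 0, M 0 1 - M 0 0 / M 1 0 * M 1 1], ?_, ?_⟩
  · rw [Matrix.mul_fin_two, Matrix.eta_fin_two M]
    simp [Int.ediv_mul_add_emod]
  · have h0 := Int.emod_nonneg (M 0 0) hc
    have h1 := Int.emod_lt_abs (M 0 0) hc
    rw [Int.abs_eq_natAbs] at h1
    simp only [Matrix.of_apply, Matrix.cons_val', Matrix.cons_val_one, Matrix.cons_val_zero,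
      Matrix.empty_val', Matrix.cons_val_fin_one]
    omega

theorem mobius_of_lower_left_eq_zero {M : Matrix (Fin 2) (Fin 2) ℤ} (hM : IsUnit M.det)
    (hc : M 1 0 = 0) (x : ℝ) : ∃ k : ℤ, mobius M x = x + k ∨ mobius M x = -x + k := by
  have hdet : IsUnit (M 0 0 * M 1 1) := by simpa [Matrix.det_fin_two, hc] using hM
  obtain ⟨ha, hd⟩ := IsUnit.mul_iff.mp hdet
  refine ⟨M 0 1 * M 1 1, ?_⟩
  rcases Int.isUnit_iff.mp ha with ha | ha <;> rcases Int.isUnit_iff.mp hd with hd | hd <;>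
    simp [mobius, ha, hc, hd, div_neg, add_comm]

theorem mobius_eq_inv_add (q : ℤ) {z : ℝ} (hz : z ≠ 0) :
    mobius !![q, 1; 1, 0] z = z⁻¹ + q := by
  simp only [mobius, Matrix.of_apply, Matrix.cons_val', Matrix.cons_val_zero,
    Matrix.cons_val_fin_one, Matrix.cons_val_one, Matrix.empty_val', Int.cast_one, one_mul,
    Int.cast_zero, add_zero]
  field_simp
  ring

theorem SameGrandOrbit.mobius {x : ℝ} (hx : Irrational x) {M : Matrix (Fin 2) (Fin 2) ℤ}
    (hM : IsUnit M.det) : SameGrandOrbit cfShift x (_root_.mobius M x) := by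
  induction h : (M 1 0).natAbs using Nat.strong_induction_on generalizing M with
  | _ n ih =>
    by_cases hc : M 1 0 = 0
    · obtain ⟨k, hk | hk⟩ := mobius_of_lower_left_eq_zero hM hc x <;> rw [hk]
      · exact add_intCast x k
      · exact (neg hx).trans (add_intCast _ k)
    · obtain ⟨q, N, rfl, hlt⟩ := exists_eq_mul_natAbs_lt hc
      have hN : IsUnit N.det := by
        rw [Matrix.det_mul] at hM
        exact isUnit_of_mul_isUnit_right hM
      have hz := hx.mobius hN.ne_zero
      rw [mobius_mul _ _ (mobius_denom_ne_zero hN.ne_zero hx), mobius_eq_inv_add q hz.ne_zero]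
      calc SameGrandOrbit cfShift x (_root_.mobius N x) := ih _ (h ▸ hlt) hN rfl
        SameGrandOrbit cfShift _ (_root_.mobius N x)⁻¹ := inv hz
        SameGrandOrbit cfShift _ ((_root_.mobius N x)⁻¹ + q) := add_intCast _ q

open GenContFract in
theorem intFractPair_stream_eq {x : ℝ} (hx : Irrational x) (n : ℕ) :
    IntFractPair.stream x n = some ⟨cfDigit n x, Int.fract (cfShift^[n] x)⟩ := by
  induction n generalizing x with
  | zero => rfl
  | succ n ih =>
    rw [IntFractPair.stream_succ hx.fract.ne_zero, ← cfShift, ih hx.cfShift]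
    rfl

theorem eq_of_cfDigit_eq {x y : ℝ} (hx : Irrational x) (hy : Irrational y)
    (h : ∀ n, cfDigit n x = cfDigit n y) : x = y := by
  have hof : GenContFract.of x = GenContFract.of y := by
    ext1
    · rw [GenContFract.of_h_eq_floor, GenContFract.of_h_eq_floor]
      exact congrArg Int.cast (h 0)
    · refine Stream'.Seq.ext fun n => ?_
      rw [GenContFract.get?_of_eq_some_of_succ_get?_intFractPair_stream
          (intFractPair_stream_eq hx (n + 1)),
        GenContFract.get?_of_eq_some_of_succ_get?_intFractPair_stream
          (intFractPair_stream_eq hy (n + 1)), h]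
  exact tendsto_nhds_unique (GenContFract.of_convergence x) (hof ▸ GenContFract.of_convergence y)

theorem cfTailEquiv_iff_sameGrandOrbit {x y : ℝ} (hx : Irrational x) (hy : Irrational y) :
    CFTailEquiv x y ↔ SameGrandOrbit cfShift x y := by
  constructor
  · rintro ⟨n, m, -, -, h⟩
    refine ⟨n, m, eq_of_cfDigit_eq (hx.iterate_cfShift n) (hy.iterate_cfShift m) fun i => ?_⟩
    rw [← cfDigit_add, ← cfDigit_add, h]
  · rintro ⟨n, m, h⟩
    refine ⟨n + 1, m + 1, n.succ_pos, m.succ_pos, fun i => ?_⟩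
    rw [cfDigit_add, cfDigit_add, Function.iterate_succ_apply', Function.iterate_succ_apply', h]

/-- Two irrational numbers are in the same orbit of the action
of `PGL₂(ℤ)` on the irrationals if and only if their continued fraction
expansions are tail equivalent. -/
theorem pgl2z_orbit_iff_tail_equiv (x y : ℝ) (hx : Irrational x)
    (hy : Irrational y) : SamePGL2ZOrbit x y ↔ CFTailEquiv x y := by
  rw [cfTailEquiv_iff_sameGrandOrbit hx hy]
  constructor
  · intro h
    obtain ⟨M, hM, rfl⟩ := samePGL2ZOrbit_iff.mp h
    exact SameGrandOrbit.mobius hx hM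
  · rintro ⟨n, m, h⟩
    have hxz := samePGL2ZOrbit_iterate_cfShift hx n
    rw [h] at hxz
    exact hxz.trans hx ((samePGL2ZOrbit_iterate_cfShift hy m).symm hy)
end

section
/- Let E be an abstract system of congruences on n that is expanding, witnessed by sequences (V_i)_{i≤k}, (W_i)_{i≤k} with V_i E W_i, W_i ⊆ V_{i+1} for i < k, and W_k ⊊ V_0. Suppose {A_0,...,A_{n-1}} is an a-realization of E for an action a of a group Γ on X, witnessed by group elements γ_i with γ_i · (∪_{j∈V_i} A_j) = ∪_{j∈W_i} A_j. Let γ = γ_k ··· γ_1 γ_0, A = ∪_{i∈V_0} A_i and B = ∪_{i∈W_k} A_i. Then γ·A ⊆ B ⊆ A, and for every x ∈ A \ B and every m > 0, γ^m · x ∉ A \ B. -/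
open Pointwise

/-- A nonempty proper subset. -/
def IsProperSub {n : ℕ} (U : Set (Fin n)) : Prop := U ≠ ∅ ∧ U ≠ Set.univ

/-- An abstract system of congruences on `n`: an equivalence relation on the
nonempty proper subsets of `{0,…,n-1}` which is closed under complementation. -/
def IsASC {n : ℕ} (E : Set (Fin n) → Set (Fin n) → Prop) : Prop :=
  (∀ U V, E U V → IsProperSub U ∧ IsProperSub V) ∧
  (∀ U, IsProperSub U → E U U) ∧
  (∀ U V, E U V → E V U) ∧
  (∀ U V W, E U V → E V W → E U W) ∧
  (∀ U V, E U V → E Uᶜ Vᶜ)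

/-- Suppose `E` is an expanding abstract system of congruences
on `n`, witnessed by `(V_i)_{i≤k}`, `(W_i)_{i≤k}` with `V_i E W_i`,
`W_i ⊆ V_{i+1}` for `i < k` and `W_k ⊊ V_0`, and suppose `A` is a realization
with group elements `γ_i` carrying `⋃_{j∈V_i} A_j` onto `⋃_{j∈W_i} A_j`. Let
`γ = γ_k ⋯ γ_1 γ_0`, `A = ⋃_{i∈V_0} A_i` and `B = ⋃_{i∈W_k} A_i`. Then
`γ·A ⊆ B ⊆ A`, and for every `x ∈ A \ B` and every `m > 0`, `γ^m·x ∉ A \ B`. -/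
theorem expanding_realization_compression {n k : ℕ}
    (E : Set (Fin n) → Set (Fin n) → Prop) (hE : IsASC E)
    (V W : ℕ → Set (Fin n))
    (hEVW : ∀ i ≤ k, E (V i) (W i))
    (hWV : ∀ i < k, W i ⊆ V (i + 1))
    (hexp : W k ⊂ V 0)
    (Γ : Type*) [Group Γ] (X : Type*) [MulAction Γ X]
    (A : Fin n → Set X) (hpart : ∀ x : X, ∃! i : Fin n, x ∈ A i)
    (γ : ℕ → Γ)
    (hγ : ∀ i ≤ k, (γ i) • (⋃ j ∈ V i, A j) = ⋃ j ∈ W i, A j) :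
    (((List.range (k + 1)).reverse.map γ).prod • (⋃ i ∈ V 0, A i) ⊆
        ⋃ i ∈ W k, A i) ∧
    (⋃ i ∈ W k, A i) ⊆ (⋃ i ∈ V 0, A i) ∧
    ∀ x ∈ (⋃ i ∈ V 0, A i) \ (⋃ i ∈ W k, A i), ∀ m : ℕ, 0 < m →
      (((List.range (k + 1)).reverse.map γ).prod ^ m) • x ∉
        (⋃ i ∈ V 0, A i) \ (⋃ i ∈ W k, A i) := by
  -- key lemma: partial products map A into ⋃ W i
  have key : ∀ i, i ≤ k →
      ((List.range (i + 1)).reverse.map γ).prod • (⋃ j ∈ V 0, A j) ⊆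
        ⋃ j ∈ W i, A j := by
    intro i
    induction i with
    | zero =>
      intro _
      simpa [List.range_succ] using (hγ 0 (Nat.zero_le k)).le
    | succ i ih =>
      intro hik
      have h1 : ((List.range (i + 1 + 1)).reverse.map γ).prod
          = γ (i + 1) * ((List.range (i + 1)).reverse.map γ).prod := by
        rw [List.range_succ, List.reverse_append]
        simp
      rw [h1, mul_smul]
      have h2 := ih (Nat.le_of_succ_le hik)
      have h3 : (⋃ j ∈ W i, A j) ⊆ ⋃ j ∈ V (i + 1), A j :=
        Set.biUnion_subset_biUnion_left (hWV i hik)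
      calc γ (i + 1) • ((List.range (i + 1)).reverse.map γ).prod • (⋃ j ∈ V 0, A j)
          ⊆ γ (i + 1) • (⋃ j ∈ V (i + 1), A j) :=
            Set.smul_set_mono (h2.trans h3)
        _ = ⋃ j ∈ W (i + 1), A j := hγ (i + 1) hik
  have hAB : ((List.range (k + 1)).reverse.map γ).prod • (⋃ i ∈ V 0, A i) ⊆
      ⋃ i ∈ W k, A i := key k le_rfl
  have hBA : (⋃ i ∈ W k, A i) ⊆ ⋃ i ∈ V 0, A i :=
    Set.biUnion_subset_biUnion_left hexp.subset
  refine ⟨hAB, hBA, ?_⟩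
  intro x hx m hm
  -- γ^m • x ∈ B for all m ≥ 1
  have hmem : ∀ m : ℕ, 0 < m →
      (((List.range (k + 1)).reverse.map γ).prod ^ m) • x ∈ ⋃ i ∈ W k, A i := by
    intro m hm
    induction m with
    | zero => exact absurd hm (lt_irrefl 0)
    | succ m ih =>
      rcases Nat.eq_zero_or_pos m with h0 | hpos
      · subst h0
        rw [pow_one]
        exact hAB (Set.smul_mem_smul_set hx.1)
      · rw [pow_succ', mul_smul]
        have := ih hpos
        exact hAB (Set.smul_mem_smul_set (hBA this))
  intro hcon
  exact hcon.2 (hmem m hm)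
end

section
/- Let G be a graph on X where every vertex has degree at least 2, and suppose the edge set of G is partitioned into paths p_0, p_1, ..., processed in an end-ordered fashion, each of length at least 4 and at most 2·4. Then there is a coloring c : X → {0,1} such that every vertex has at most one neighbor of the same color. In particular, any finite acyclic graph of minimum degree at least 2 whose edges decompose into end-ordered vertex-disjoint-within-levels paths of length at least 4 admits a strongly unfriendly 2-coloring. -/
/-!
Colour the vertices level by level: a vertex gets its colour when the first path through it is
processed. By end-ordering, the only vertices of that path which were seen before are its ends,
so the path is coloured with its end colours prescribed. Along a path of length `m ≥ 4` alternate
from the first end up to position `2` and from the last end down to position `3`; then the only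
edge of the path that can be monochromatic joins positions `2` and `3`, both interior. A vertex
interior to some path of the decomposition lies on no other path, so a vertex has at most one
neighbour of its own colour.
-/

/-- A (simple) path in a graph `G`, packaged with its endpoints. -/
structure GPath {V : Type*} (G : SimpleGraph V) where
  a : V
  b : V
  walk : G.Walk a b
  isPath : walk.IsPath

namespace GPath

variable {V : Type*} {G : SimpleGraph V}

def IsEndpoint (p : GPath G) (x : V) : Prop := x = p.a ∨ x = p.b

def Mem (p : GPath G) (x : V) : Prop := x ∈ p.walk.support

end GPath

/-- A path decomposition of a graph `G` (see the paper): each `P i` consists of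
vertex-disjoint paths, the sequence is end-ordered, and every edge of `G`
appears in exactly one path among all the `P i`. -/
def IsPathDecomposition {V : Type*} (G : SimpleGraph V)
    (P : ℕ → Set (GPath G)) : Prop :=
  (∀ i, ∀ p ∈ P i, 1 ≤ p.walk.length) ∧
  (∀ i, ∀ p ∈ P i, ∀ q ∈ P i, p ≠ q → ∀ x, p.Mem x → ¬ q.Mem x) ∧
  (∀ i j, i < j → ∀ p ∈ P i, ∀ q ∈ P j, ∀ x, p.Mem x → q.Mem x →
    q.IsEndpoint x) ∧
  (∀ e ∈ G.edgeSet, ∃! pr : ℕ × GPath G, pr.2 ∈ P pr.1 ∧ e ∈ pr.2.walk.edges)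

def pathPattern (m : ℕ) (b₀ bₘ : Bool) (k : ℕ) : Bool :=
  if k ≤ 2 then b₀ ^^ k.bodd else bₘ ^^ (m - k).bodd

section

variable {m k : ℕ} {b₀ bₘ : Bool}

lemma pathPattern_zero : pathPattern m b₀ bₘ 0 = b₀ := by simp [pathPattern]

lemma pathPattern_self (hm : 2 < m) : pathPattern m b₀ bₘ m = bₘ := by
  simp [pathPattern, Nat.not_le.mpr hm]

lemma pathPattern_succ_ne (hk : k ≠ 2) (hkm : k < m) :
    pathPattern m b₀ bₘ (k + 1) ≠ pathPattern m b₀ bₘ k := by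
  rcases Nat.lt_or_gt_of_ne hk with hk | hk
  · simp [pathPattern, show k + 1 ≤ 2 by omega, show k ≤ 2 by omega, Nat.bodd_succ]
  · obtain ⟨n, hn⟩ : ∃ n, m - k = n + 1 := ⟨m - (k + 1), by omega⟩
    simp [pathPattern, show ¬k + 1 ≤ 2 by omega, show ¬k ≤ 2 by omega, hn,
      show m - (k + 1) = n by omega, Nat.bodd_succ]

end

namespace SimpleGraph.Walk.IsPath

variable {V : Type*} [DecidableEq V] {G : SimpleGraph V} {u v : V} {w : G.Walk u v} {k : ℕ}

lemma idxOf_support_getVert (hw : w.IsPath) (hk : k ≤ w.length) :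
    w.support.idxOf (w.getVert k) = k := by
  have hlt := List.idxOf_lt_length_of_mem (w.getVert_mem_support k)
  rw [length_support] at hlt
  exact hw.getVert_injOn (by simpa [Nat.lt_succ_iff] using hlt) hk
    (w.getVert_support_idxOf (w.getVert_mem_support k))

end SimpleGraph.Walk.IsPath

namespace GPath

variable {V : Type*} {G : SimpleGraph V} {p : GPath G} {x : V}

lemma not_isEndpoint_getVert {k : ℕ} (hk₀ : 0 < k) (hk : k < p.walk.length) :
    ¬ p.IsEndpoint (p.walk.getVert k) := by
  rintro (h | h)
  · exact hk₀.ne' ((p.isPath.getVert_eq_start_iff hk.le).mp h)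
  · exact hk.ne ((p.isPath.getVert_eq_end_iff hk.le).mp h)

lemma mem_getVert {k : ℕ} : p.Mem (p.walk.getVert k) := p.walk.getVert_mem_support k

lemma mem_not_isEndpoint_of_mem_getVert_two_three (hlen : 4 ≤ p.walk.length)
    (hx : x ∈ s(p.walk.getVert 2, p.walk.getVert 3)) : p.Mem x ∧ ¬ p.IsEndpoint x := by
  rcases Sym2.mem_iff.mp hx with rfl | rfl <;>
    exact ⟨mem_getVert, not_isEndpoint_getVert (by omega) (by omega)⟩

end GPath

namespace PathDecomposition

open SimpleGraph
open scoped Classical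

variable {V : Type*} {G : SimpleGraph V} (P : ℕ → Set (GPath G))

def LevelsDisjoint : Prop :=
  ∀ i, ∀ p ∈ P i, ∀ q ∈ P i, p ≠ q → ∀ x, p.Mem x → ¬ q.Mem x

def EndOrdered : Prop :=
  ∀ i j, i < j → ∀ p ∈ P i, ∀ q ∈ P j, ∀ x, p.Mem x → q.Mem x → q.IsEndpoint x

noncomputable def level (x : V) : ℕ := sInf {i | ∃ p ∈ P i, p.Mem x}

noncomputable def color (x : V) : Bool :=
  if h : ∃ p ∈ P (level P x), p.Mem x then
    let p := Classical.choose h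
    pathPattern p.walk.length
      (if level P p.a < level P x then color p.a else false)
      (if level P p.b < level P x then color p.b else false)
      (p.walk.support.idxOf x)
  else false
termination_by level P x

variable {P}
variable {i : ℕ} {p : GPath G} {x : V}

lemma level_le (hp : p ∈ P i) (hx : p.Mem x) : level P x ≤ i :=
  Nat.sInf_le (⟨p, hp, hx⟩ : ∃ p ∈ P i, p.Mem x)

lemma exists_mem_level (hp : p ∈ P i) (hx : p.Mem x) : ∃ q ∈ P (level P x), q.Mem x :=
  Nat.sInf_mem (s := {i | ∃ p ∈ P i, p.Mem x}) ⟨i, p, hp, hx⟩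

lemma color_eq_of_mem_level (hdisj : LevelsDisjoint P) (hp : p ∈ P (level P x)) (hx : p.Mem x) :
    color P x = pathPattern p.walk.length
      (if level P p.a < level P x then color P p.a else false)
      (if level P p.b < level P x then color P p.b else false)
      (p.walk.support.idxOf x) := by
  have h : ∃ q ∈ P (level P x), q.Mem x := ⟨p, hp, hx⟩
  obtain ⟨hq, hxq⟩ := Classical.choose_spec h
  have : Classical.choose h = p := by_contra fun hne ↦ hdisj _ _ hq p hp hne x hxq hx
  rw [color, dif_pos h, this]

/-- An end of `p ∈ P i` first seen at level `i` was coloured `false`, the default boundary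
value. -/
lemma boundary_eq_color (hdisj : LevelsDisjoint P) (hp : p ∈ P i) (hlen : 2 < p.walk.length)
    {y : V} (hy : p.IsEndpoint y) :
    (if level P y < i then color P y else false) = color P y := by
  have hmem : p.Mem y := by
    rcases hy with rfl | rfl
    exacts [p.walk.start_mem_support, p.walk.end_mem_support]
  rcases (level_le hp hmem).lt_or_eq with hlt | rfl
  · exact if_pos hlt
  rw [if_neg (lt_irrefl _), color_eq_of_mem_level hdisj hp hmem]
  rcases hy with rfl | rfl
  · have h0 := p.isPath.idxOf_support_getVert (Nat.zero_le _)
    rw [p.walk.getVert_zero] at h0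
    rw [h0, pathPattern_zero, if_neg (lt_irrefl _)]
  · have hm := p.isPath.idxOf_support_getVert le_rfl
    rw [p.walk.getVert_length] at hm
    rw [hm, pathPattern_self hlen, if_neg (lt_irrefl _)]

lemma color_getVert (hdisj : LevelsDisjoint P) (hend : EndOrdered P) (hp : p ∈ P i)
    (hlen : 2 < p.walk.length) {k : ℕ} (hk : k ≤ p.walk.length) :
    color P (p.walk.getVert k) = pathPattern p.walk.length (color P p.a) (color P p.b) k := by
  have hmem : p.Mem (p.walk.getVert k) := GPath.mem_getVert
  rcases (level_le hp hmem).lt_or_eq with hlt | heq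
  · obtain ⟨q, hq, hxq⟩ := exists_mem_level hp hmem
    rcases hend _ _ hlt q hq p hp _ hxq hmem with h | h
    · rw [(p.isPath.getVert_eq_start_iff hk).mp h, pathPattern_zero, p.walk.getVert_zero]
    · rw [(p.isPath.getVert_eq_end_iff hk).mp h, pathPattern_self hlen, p.walk.getVert_length]
  · rw [color_eq_of_mem_level hdisj (heq ▸ hp) hmem, p.isPath.idxOf_support_getVert hk, heq,
      boundary_eq_color hdisj hp hlen (Or.inl rfl), boundary_eq_color hdisj hp hlen (Or.inr rfl)]

lemma color_getVert_succ_ne (hdisj : LevelsDisjoint P) (hend : EndOrdered P) (hp : p ∈ P i)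
    (hlen : 2 < p.walk.length) {k : ℕ} (hk : k < p.walk.length) (hk₂ : k ≠ 2) :
    color P (p.walk.getVert (k + 1)) ≠ color P (p.walk.getVert k) := by
  rw [color_getVert hdisj hend hp hlen hk, color_getVert hdisj hend hp hlen hk.le]
  exact pathPattern_succ_ne hk₂ hk

lemma exists_eq_getVert_two_three_of_color_eq (hdisj : LevelsDisjoint P) (hend : EndOrdered P)
    (hcover : ∀ e ∈ G.edgeSet, ∃ i, ∃ p ∈ P i, e ∈ p.walk.edges)
    (hlen : ∀ i, ∀ p ∈ P i, 2 < p.walk.length) {x y : V} (hxy : G.Adj x y)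
    (hc : color P x = color P y) :
    ∃ i, ∃ p ∈ P i, s(x, y) = s(p.walk.getVert 2, p.walk.getVert 3) := by
  obtain ⟨i, p, hp, he⟩ := hcover s(x, y) hxy
  obtain ⟨k, hk, hkxy⟩ := (Walk.mk_mem_edges_iff_exists p.walk).mp he
  obtain rfl : k = 2 := by
    by_contra hk₂
    refine color_getVert_succ_ne hdisj hend hp (hlen i p hp) hk hk₂ ?_
    rcases Sym2.eq_iff.mp hkxy with ⟨h₁, h₂⟩ | ⟨h₁, h₂⟩ <;> rw [h₁, h₂]
    exacts [hc.symm, hc]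
  exact ⟨i, p, hp, hkxy.symm⟩

lemma eq_of_mem_of_not_isEndpoint (hdisj : LevelsDisjoint P) (hend : EndOrdered P) {j : ℕ}
    {q : GPath G} (hp : p ∈ P i) (hq : q ∈ P j) (hxp : p.Mem x) (hxq : q.Mem x)
    (hp' : ¬ p.IsEndpoint x) (hq' : ¬ q.IsEndpoint x) : p = q := by
  rcases lt_trichotomy i j with hij | rfl | hij
  · exact absurd (hend i j hij p hp q hq x hxp hxq) hq'
  · by_contra hne
    exact hdisj i p hp q hq hne x hxp hxq
  · exact absurd (hend j i hij q hq p hp x hxq hxp) hp'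

end PathDecomposition

open PathDecomposition in
theorem path_decomposition_strongly_unfriendly_general {V : Type*}
    (G : SimpleGraph V)
    (P : ℕ → Set (GPath G)) (hP : IsPathDecomposition G P)
    (hlen : ∀ i, ∀ p ∈ P i, 4 ≤ p.walk.length ∧ p.walk.length ≤ 2 * 4) :
    ∃ c : V → Bool, ∀ x : V, {y : V | G.Adj x y ∧ c y = c x}.Subsingleton := by
  obtain ⟨-, hdisj, hend, huniq⟩ := hP
  have hcover : ∀ e ∈ G.edgeSet, ∃ i, ∃ p ∈ P i, e ∈ p.walk.edges := fun e he ↦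
    let ⟨⟨i, p⟩, ⟨hp, hep⟩, _⟩ := huniq e he
    ⟨i, p, hp, hep⟩
  have hlen₄ : ∀ i, ∀ p ∈ P i, 4 ≤ p.walk.length := fun i p hp ↦ (hlen i p hp).1
  have hlen₂ : ∀ i, ∀ p ∈ P i, 2 < p.walk.length := fun i p hp ↦
    (hlen₄ i p hp).trans_lt' (by norm_num)
  refine ⟨color P, fun x y hy z hz ↦ ?_⟩
  obtain ⟨i, p, hp, hpy⟩ :=
    exists_eq_getVert_two_three_of_color_eq hdisj hend hcover hlen₂ hy.1 hy.2.symm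
  obtain ⟨j, q, hq, hqz⟩ :=
    exists_eq_getVert_two_three_of_color_eq hdisj hend hcover hlen₂ hz.1 hz.2.symm
  obtain ⟨hxp, hxp'⟩ := GPath.mem_not_isEndpoint_of_mem_getVert_two_three (hlen₄ i p hp)
    (hpy ▸ Sym2.mem_mk_left x y)
  obtain ⟨hxq, hxq'⟩ := GPath.mem_not_isEndpoint_of_mem_getVert_two_three (hlen₄ j q hq)
    (hqz ▸ Sym2.mem_mk_left x z)
  obtain rfl := eq_of_mem_of_not_isEndpoint hdisj hend hp hq hxp hxq hxp' hxq'
  exact Sym2.congr_right.mp (hpy.trans hqz.symm)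

/-- Let `G` be a graph in which every vertex has degree at
least `2`, and suppose the edge set of `G` is partitioned into end-ordered
paths, each of length at least `4` and at most `2·4 = 8`. Then there is a
`2`-coloring `c` of the vertices such that every vertex has at most one
neighbor of the same color (a strongly unfriendly coloring). -/
theorem path_decomposition_strongly_unfriendly {V : Type*}
    (G : SimpleGraph V) (hdeg : ∀ v : V, 2 ≤ (G.neighborSet v).ncard)
    (P : ℕ → Set (GPath G)) (hP : IsPathDecomposition G P)
    (hlen : ∀ i, ∀ p ∈ P i, 4 ≤ p.walk.length ∧ p.walk.length ≤ 2 * 4) :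
    ∃ c : V → Bool, ∀ x : V, {y : V | G.Adj x y ∧ c y = c x}.Subsingleton :=
  path_decomposition_strongly_unfriendly_general G P hP hlen
end
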